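/- arXiv:2507.13845 — 8 statements merged into one kernel-verified Lean document; each statement's English description precedes it below -/
import Mathlib

section
/- Let M ⊆ N be an extension of commutative cancellative torsion-free monoids. The extension M ⊆ N is subintegral if and only if for every z ∈ N there exists n_0 such that z^j ∈ M for all j ≥ n_0. -/
/-- `Q` is an elementary subintegral extension of `P`: `Q = P ∪ xP` for some `x ∈ Q`
with `x², x³ ∈ P`. -/
def IsElementarySubintegral {N : Type*} [CommMonoid N] (P Q : Submonoid N) : Prop :=
  ∃ x : N, (Q : Set N) = (P : Set N) ∪ (fun m => x * m) '' (P : Set N) ∧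
    x ^ 2 ∈ P ∧ x ^ 3 ∈ P

/-- The extension `M ⊆ N` is subintegral: `N` is a union of submonoids each obtained
from `M` by a finite succession of elementary subintegral extensions. -/
def IsSubintegralMonoidExt {N : Type*} [CommMonoid N] (M : Submonoid N) : Prop :=
  ∀ z : N, ∃ Q : Submonoid N,
    Relation.ReflTransGen IsElementarySubintegral M Q ∧ z ∈ Q

private lemma chain_pow {N : Type*} [CommMonoid N] {M Q : Submonoid N}
    (h : Relation.ReflTransGen IsElementarySubintegral M Q) :
    ∀ z : N, z ∈ Q → ∃ n₀ : ℕ, ∀ j : ℕ, n₀ ≤ j → z ^ j ∈ M := by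
  induction h with
  | refl => exact fun z hz => ⟨0, fun j _ => M.pow_mem hz j⟩
  | tail hPQ hstep ih =>
    rename_i P Q
    intro z hz
    obtain ⟨x, hQ, hx2, hx3⟩ := hstep
    have hz' : z ∈ (P : Set N) ∪ (fun m => x * m) '' (P : Set N) := hQ ▸ hz
    rcases hz' with hz' | ⟨m, hm, rfl⟩
    · exact ih z hz'
    · have h2 : (x * m) ^ 2 ∈ P := by
        rw [mul_pow]; exact P.mul_mem hx2 (P.pow_mem hm 2)
      have h3 : (x * m) ^ 3 ∈ P := by
        rw [mul_pow]; exact P.mul_mem hx3 (P.pow_mem hm 3)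
      obtain ⟨n₁, hn₁⟩ := ih _ h2
      obtain ⟨n₂, hn₂⟩ := ih _ h3
      refine ⟨2 * n₁ + 3 * n₂ + 2, fun j hj => ?_⟩
      obtain ⟨a, b, hab⟩ : ∃ a b, j = 2 * (n₁ + a) + 3 * (n₂ + b) := by
        rcases Nat.even_or_odd (j - (2 * n₁ + 3 * n₂)) with ⟨c, hc⟩ | ⟨c, hc⟩
        · exact ⟨c, 0, by omega⟩
        · exact ⟨c - 1, 1, by omega⟩
      have : (x * m) ^ j = ((x * m) ^ 2) ^ (n₁ + a) * ((x * m) ^ 3) ^ (n₂ + b) := by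
        rw [hab, pow_add, pow_mul, pow_mul]
      rw [this]
      exact M.mul_mem (hn₁ _ (Nat.le_add_right _ _)) (hn₂ _ (Nat.le_add_right _ _))

private def auxP {N : Type*} [CommMonoid N] (M : Submonoid N) (z : N) (k : ℕ) :
    Submonoid N where
  carrier := {y | ∃ m ∈ M, ∃ e : ℕ, (e = 0 ∨ k ≤ e) ∧ y = m * z ^ e}
  mul_mem' := by
    rintro a b ⟨m1, hm1, e1, he1, rfl⟩ ⟨m2, hm2, e2, he2, rfl⟩
    exact ⟨m1 * m2, M.mul_mem hm1 hm2, e1 + e2, by omega,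
      by rw [pow_add, mul_mul_mul_comm]⟩
  one_mem' := ⟨1, M.one_mem, 0, Or.inl rfl, by simp⟩

private lemma auxP_step {N : Type*} [CommMonoid N] (M : Submonoid N) (z : N)
    {k : ℕ} (hk : 1 ≤ k) :
    IsElementarySubintegral (auxP M z (k + 1)) (auxP M z k) := by
  refine ⟨z ^ k, ?_, ⟨1, M.one_mem, k * 2, Or.inr (by omega), by rw [one_mul, pow_mul]⟩,
    ⟨1, M.one_mem, k * 3, Or.inr (by omega), by rw [one_mul, pow_mul]⟩⟩
  ext y
  constructor
  · rintro ⟨m, hm, e, he, rfl⟩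
    rcases he with rfl | he
    · exact Or.inl ⟨m, hm, 0, Or.inl rfl, rfl⟩
    · rcases Nat.lt_or_ge e (k + 1) with he' | he'
      · have : e = k := by omega
        subst this
        exact Or.inr ⟨m, ⟨m, hm, 0, Or.inl rfl, by simp⟩, (mul_comm _ _)⟩
      · exact Or.inl ⟨m, hm, e, Or.inr he', rfl⟩
  · rintro (⟨m, hm, e, he, rfl⟩ | ⟨w, ⟨m, hm, e, he, rfl⟩, rfl⟩)
    · exact ⟨m, hm, e, by omega, rfl⟩
    · exact ⟨m, hm, e + k, Or.inr (by omega),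
        by show z ^ k * (m * z ^ e) = _; rw [mul_left_comm, ← pow_add, Nat.add_comm e k]⟩

private lemma auxP_chain {N : Type*} [CommMonoid N] (M : Submonoid N) (z : N) :
    ∀ k : ℕ, 1 ≤ k →
      Relation.ReflTransGen IsElementarySubintegral (auxP M z k) (auxP M z 1) := by
  intro k
  induction k with
  | zero => omega
  | succ n ih =>
    intro _
    cases n with
    | zero => exact Relation.ReflTransGen.refl
    | succ m =>
      exact Relation.ReflTransGen.head (auxP_step M z (by omega)) (ih (by omega))

/-- For commutative cancellative torsion-free monoids `M ⊆ N`, the extension is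
subintegral iff for every `z ∈ N` there is `n₀` with `z^j ∈ M` for all `j ≥ n₀`. -/
theorem stmt_2 {N : Type*} [CancelCommMonoid N]
    (htf : ∀ (x y : N) (k : ℕ), 0 < k → x ^ k = y ^ k → x = y)
    (M : Submonoid N) :
    IsSubintegralMonoidExt M ↔
      ∀ z : N, ∃ n₀ : ℕ, ∀ j : ℕ, n₀ ≤ j → z ^ j ∈ M := by
  constructor
  · intro h z
    obtain ⟨Q, hchain, hz⟩ := h z
    exact chain_pow hchain z hz
  · intro h z
    obtain ⟨n₀, hn⟩ := h z
    set k := max n₀ 1 with hk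
    have hMeq : M = auxP M z k := by
      ext y
      constructor
      · intro hy; exact ⟨y, hy, 0, Or.inl rfl, by simp⟩
      · rintro ⟨m, hm, e, he, rfl⟩
        rcases he with rfl | he
        · simpa using hm
        · exact M.mul_mem hm (hn e (le_trans (le_max_left _ _) he))
    refine ⟨auxP M z 1, ?_, ⟨1, M.one_mem, 1, Or.inr le_rfl, by simp⟩⟩
    nth_rewrite 1 [hMeq]
    exact auxP_chain M z k (le_max_right _ _)
end

section
/- Let A be a commutative ring, M ⊆ N an extension of commutative cancellative torsion-free monoids, and suppose ℤ ⊆ A (A has characteristic zero with ℤ injecting). If the ring extension A[M] ⊆ A[N] is weakly subintegral, then for every z ∈ N one has z^n ∈ M for all sufficiently large n (i.e., the monoid extension M ⊆ N is subintegral). -/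
lemma binom_det_ne_zero {p : ℕ} {x : Fin (p+1) → ℕ} (hx : Function.Injective x) :
    (Matrix.of fun j i : Fin (p+1) => ((x j).choose i.val : ℚ)).det ≠ 0 := by
  have key : (Matrix.vandermonde (fun j => (x j : ℚ))).det =
      (Matrix.of fun j i : Fin (p+1) => ((descPochhammer ℚ i.val).eval (x j : ℚ))).det :=
    Matrix.det_eval_matrixOfPolynomials_eq_det_vandermonde _ _
      (fun i => descPochhammer_natDegree (R := ℚ) i.val) (fun i => monic_descPochhammer _ _)
  have heq : (Matrix.of fun j i : Fin (p+1) => ((descPochhammer ℚ i.val).eval (x j : ℚ))) =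
      (Matrix.of fun j i : Fin (p+1) => ((x j).choose i.val : ℚ)) *
        Matrix.diagonal (fun i : Fin (p+1) => (Nat.factorial i.val : ℚ)) := by
    ext j i
    rw [Matrix.mul_diagonal]
    rw [Matrix.of_apply, Matrix.of_apply, descPochhammer_eval_eq_descFactorial,
      Nat.descFactorial_eq_factorial_mul_choose]
    push_cast
    ring
  have hv : (Matrix.vandermonde (fun j => (x j : ℚ))).det ≠ 0 :=
    Matrix.det_vandermonde_ne_zero_iff.mpr (fun a b h => hx (Nat.cast_injective h))
  intro h0
  rw [key, heq, Matrix.det_mul, h0, zero_mul] at hv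
  exact hv rfl


/-- `b` is weakly subintegral over the subring `S` of `R` (Reid–Roberts–Singh criterion):
there exist `c 1, ..., c p ∈ R` with `b^n + ∑_{i=1}^p C(n,i)·(c i)·b^{n-i} ∈ S`
for all `n ≥ 1`. -/
def IsWeaklySubintegralElem {R : Type*} [CommRing R] (S : Subring R) (b : R) : Prop :=
  ∃ (p : ℕ) (c : ℕ → R), ∀ n : ℕ, 1 ≤ n →
    b ^ n + ∑ i ∈ Finset.Icc 1 p, (n.choose i : R) * c i * b ^ (n - i) ∈ S

/-- Let `A` be a commutative ring with `ℤ ⊆ A`, and `M ⊆ N` an extension of commutative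
cancellative torsion-free monoids. If `A[M] ⊆ A[N]` is weakly subintegral, then for every
`z ∈ N`, `z^n ∈ M` for all sufficiently large `n` (i.e. `M ⊆ N` is subintegral). -/
theorem stmt_5 {A : Type*} [CommRing A] [CharZero A] {N : Type*} [CancelCommMonoid N]
    (htf : ∀ (x y : N) (k : ℕ), 0 < k → x ^ k = y ^ k → x = y)
    (M : Submonoid N)
    (hweak : ∀ f : MonoidAlgebra A N,
      IsWeaklySubintegralElem
        ((Algebra.adjoin A ((MonoidAlgebra.of A N) '' (M : Set N))).toSubring) f) :
    ∀ z : N, ∃ n₀ : ℕ, ∀ n : ℕ, n₀ ≤ n → z ^ n ∈ M := by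
  classical
  intro z
  by_contra hcon
  push_neg at hcon
  obtain ⟨p, c, hc⟩ := hweak (MonoidAlgebra.of A N z)
  -- support of elements of the adjoin is contained in M
  have hsupp : ∀ f : MonoidAlgebra A N,
      f ∈ Algebra.adjoin A ((MonoidAlgebra.of A N) '' (M : Set N)) →
      ∀ y : N, y ∉ M → f.coeff y = 0 := by
    intro f hf y hy
    have hle : Algebra.adjoin A ((MonoidAlgebra.of A N) '' (M : Set N)) ≤
        (MonoidAlgebra.mapDomainAlgHom A A M.subtype).range := by
      apply Algebra.adjoin_le
      rintro _ ⟨m, hm, rfl⟩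
      refine ⟨MonoidAlgebra.of A M ⟨m, hm⟩, ?_⟩
      show MonoidAlgebra.mapDomain (M.subtype) (MonoidAlgebra.single (⟨m, hm⟩ : M) (1:A)) = _
      rw [MonoidAlgebra.mapDomain_single]
      rfl
    obtain ⟨g, hg⟩ := hle hf
    rw [← hg]
    show (Finsupp.mapDomain (M.subtype) g.coeff) y = 0
    by_contra h0
    have hmem : y ∈ (Finsupp.mapDomain (M.subtype) g.coeff).support :=
      Finsupp.mem_support_iff.mpr h0
    have := Finsupp.mapDomain_support hmem
    rw [Finset.mem_image] at this
    obtain ⟨m, _, rfl⟩ := this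
    exact hy m.2
  set a : ℕ → A := fun i => (c i).coeff (z ^ i) with ha
  -- the key numerical relations
  have key : ∀ n : ℕ, p ≤ n → 1 ≤ n → z ^ n ∉ M →
      (1 : A) + ∑ i ∈ Finset.Icc 1 p, (n.choose i : A) * a i = 0 := by
    intro n hpn h1n hnM
    have hmem := hc n h1n
    have h0 := hsupp _ hmem (z ^ n) hnM
    rw [MonoidAlgebra.coeff_add, MonoidAlgebra.coeff_sum, Finsupp.add_apply, Finsupp.finset_sum_apply] at h0
    have hpow : ∀ k : ℕ, (MonoidAlgebra.of A N z) ^ k =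
        MonoidAlgebra.single (z ^ k) (1 : A) := by
      intro k; rw [← map_pow]; rfl
    have h1 : ((MonoidAlgebra.of A N z) ^ n).coeff (z ^ n) = 1 := by
      rw [hpow]; exact Finsupp.single_eq_same
    have hterm : ∀ i ∈ Finset.Icc 1 p,
        (((n.choose i : MonoidAlgebra A N) * c i *
          (MonoidAlgebra.of A N z) ^ (n - i)).coeff (z ^ n) : A)
          = (n.choose i : A) * a i := by
      intro i hi
      rw [Finset.mem_Icc] at hi
      have hin : i ≤ n := le_trans hi.2 hpn
      have H : ∀ w : N, w * z ^ (n - i) = z ^ n ↔ w = z ^ i := by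
        intro w
        constructor
        · intro hw
          have : w * z ^ (n - i) = z ^ i * z ^ (n - i) := by
            rw [hw, ← pow_add, Nat.add_sub_cancel' hin]
          exact mul_right_cancel this
        · rintro rfl
          rw [← pow_add, Nat.add_sub_cancel' hin]
      rw [hpow]
      rw [MonoidAlgebra.coeff_mul_single_eq_coeff_mul _ (fun w _ => H w), mul_one]
      have hcast : (n.choose i : MonoidAlgebra A N) * c i = (n.choose i) • (c i) := by
        rw [nsmul_eq_mul]
      rw [hcast, MonoidAlgebra.coeff_smul, Finsupp.smul_apply]
      simp [ha, nsmul_eq_mul]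
    rw [Finset.sum_congr rfl hterm, h1] at h0
    exact h0
  -- choose p+1 indices where z^n ∉ M
  set Sb : Set ℕ := {n : ℕ | p + 1 ≤ n ∧ z ^ n ∉ M} with hSb
  have hinf : Sb.Infinite := by
    apply Set.infinite_of_not_bddAbove
    rintro ⟨B, hB⟩
    obtain ⟨n, hn1, hn2⟩ := hcon (max (p + 1) (B + 1))
    have hmem : n ∈ Sb := ⟨le_trans (le_max_left _ _) hn1, hn2⟩
    have h1 := hB hmem
    have h2 : B + 1 ≤ n := le_trans (le_max_right _ _) hn1
    omega
  set x : Fin (p + 1) → ℕ := fun j => ((Set.Infinite.natEmbedding Sb hinf) j.val : ℕ) with hx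
  have hxinj : Function.Injective x :=
    fun a b h => Fin.val_injective ((Set.Infinite.natEmbedding Sb hinf).injective (Subtype.coe_injective h))
  have hxSb : ∀ j, x j ∈ Sb := fun j => ((Set.Infinite.natEmbedding Sb hinf) j.val).2
  set w : ℕ → A := fun k => if k = 0 then 1 else a k with hw
  set v : Fin (p + 1) → A := fun i => w i.val with hv
  have hsum : ∀ j : Fin (p + 1), ∑ i : Fin (p + 1), ((x j).choose i.val : A) * v i = 0 := by
    intro j
    obtain ⟨hj1, hj2⟩ := hxSb j
    have hkey := key (x j) (by omega) (by omega) hj2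
    calc ∑ i : Fin (p + 1), ((x j).choose i.val : A) * v i
        = ∑ k ∈ Finset.range (p + 1), ((x j).choose k : A) * w k :=
          Fin.sum_univ_eq_sum_range (fun k => ((x j).choose k : A) * w k) (p + 1)
      _ = (∑ k ∈ Finset.range p, ((x j).choose (k + 1) : A) * w (k + 1))
            + ((x j).choose 0 : A) * w 0 := Finset.sum_range_succ' _ p
      _ = 1 + ∑ i ∈ Finset.Icc 1 p, ((x j).choose i : A) * a i := by
          rw [← Finset.Ico_add_one_right_eq_Icc, Finset.sum_Ico_eq_sum_range]
          try simp only [Nat.add_sub_cancel]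
          rw [add_comm]
          congr 1
          · simp [hw]
          · apply Finset.sum_congr rfl
            intro k hk
            have h1 : 1 + k ≠ 0 := by omega
            simp [hw, h1, Nat.add_comm 1 k]
      _ = 0 := hkey
  -- matrix contradiction
  set B : Matrix (Fin (p + 1)) (Fin (p + 1)) A :=
    Matrix.of (fun j i => ((x j).choose i.val : A)) with hB
  have hmv : B.mulVec v = 0 := by
    funext j
    simpa [Matrix.mulVec, dotProduct, hB] using hsum j
  have h2 : B.det • v = 0 := by
    have h3 := congrArg (fun w => (Matrix.adjugate B).mulVec w) hmv
    simp only [Matrix.mulVec_zero] at h3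
    rw [Matrix.mulVec_mulVec, Matrix.adjugate_mul, Matrix.smul_mulVec,
      Matrix.one_mulVec] at h3
    exact h3
  have hdet0 : B.det = 0 := by
    have h4 := congrFun h2 0
    simpa [hv, hw] using h4
  set B₀ : Matrix (Fin (p + 1)) (Fin (p + 1)) ℤ :=
    Matrix.of (fun j i => ((x j).choose i.val : ℤ)) with hB₀
  have hZ : B₀.det = 0 := by
    apply Int.cast_injective (α := A)
    rw [Int.cast_zero]
    have h5 : ((Int.castRingHom A).mapMatrix B₀) = B := by
      ext j i; simp [hB₀, hB]
    calc ((B₀.det : ℤ) : A) = ((Int.castRingHom A).mapMatrix B₀).det :=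
          (RingHom.map_det (Int.castRingHom A) B₀)
      _ = B.det := by rw [h5]
      _ = 0 := hdet0
  have hQ : (Matrix.of fun j i : Fin (p+1) => ((x j).choose i.val : ℚ)).det = 0 := by
    have h5 : ((Int.castRingHom ℚ).mapMatrix B₀) =
        Matrix.of (fun j i : Fin (p+1) => ((x j).choose i.val : ℚ)) := by
      ext j i; simp [hB₀]
    rw [← h5, ← RingHom.map_det, hZ]
    exact map_zero _
  exact binom_det_ne_zero hxinj hQ
end

section
/- The extension 𝔽_p[x^p] ⊆ 𝔽_p[x] of monoid algebras over the field with p elements is weakly subintegral but not subintegral. -/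
/-- Elementary subintegral extension of subrings: `T = S[b]` with `b², b³ ∈ S`. -/
def RingElemSubintegral {R : Type*} [CommRing R] (S T : Subring R) : Prop :=
  ∃ b : R, T = Subring.closure ((S : Set R) ∪ {b}) ∧ b ^ 2 ∈ S ∧ b ^ 3 ∈ S

/-- Elementary weakly subintegral extension of subrings: `T = S[b]` with
`b^q, q·b ∈ S` for some prime `q`. -/
def RingElemWeaklySubintegral {R : Type*} [CommRing R] (S T : Subring R) : Prop :=
  ∃ (b : R) (q : ℕ), q.Prime ∧ T = Subring.closure ((S : Set R) ∪ {b}) ∧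
    b ^ q ∈ S ∧ (q : R) * b ∈ S

/-- The ring extension `S ⊆ R` is subintegral. -/
def RingSubintegralExt {R : Type*} [CommRing R] (S : Subring R) : Prop :=
  ∀ x : R, ∃ T : Subring R,
    Relation.ReflTransGen RingElemSubintegral S T ∧ x ∈ T

/-- The ring extension `S ⊆ R` is weakly subintegral (Yanagihara): every element lies in
a subring obtained from `S` by a finite succession of elementary subintegral or
elementary weakly subintegral extensions. -/
def RingWeaklySubintegralExt {R : Type*} [CommRing R] (S : Subring R) : Prop :=
  ∀ x : R, ∃ T : Subring R,
    Relation.ReflTransGen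
      (fun P Q => RingElemSubintegral P Q ∨ RingElemWeaklySubintegral P Q) S T ∧ x ∈ T

/-- The subring of polynomials with zero derivative. -/
def derivZeroSubring (K : Type*) [CommRing K] : Subring (Polynomial K) where
  carrier := {f | Polynomial.derivative f = 0}
  mul_mem' := by
    intro a b ha hb
    simp only [Set.mem_setOf_eq] at *
    simp [Polynomial.derivative_mul, ha, hb]
  one_mem' := by simp [Set.mem_setOf_eq]
  add_mem' := by
    intro a b ha hb
    simp only [Set.mem_setOf_eq] at *
    simp [ha, hb]
  zero_mem' := by simp [Set.mem_setOf_eq]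
  neg_mem' := by
    intro a ha
    simp only [Set.mem_setOf_eq] at *
    simp [ha]

lemma mem_derivZeroSubring {K : Type*} [CommRing K] {f : Polynomial K} :
    f ∈ derivZeroSubring K ↔ Polynomial.derivative f = 0 := Iff.rfl

lemma derivZero_of_sq_cube {K : Type*} [CommRing K] [IsDomain K] {b : Polynomial K}
    (h2 : b ^ 2 ∈ derivZeroSubring K) (h3 : b ^ 3 ∈ derivZeroSubring K) :
    b ∈ derivZeroSubring K := by
  rw [mem_derivZeroSubring] at *
  have key : b ^ 2 * Polynomial.derivative b = 0 := by
    rw [show b ^ 3 = b ^ 2 * b by ring, Polynomial.derivative_mul, h2] at h3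
    rw [← h3]; ring
  rcases mul_eq_zero.mp key with h | h
  · rcases pow_eq_zero_iff (n := 2) (by norm_num) |>.mp h with rfl
    simp
  · exact h

lemma chain_le {R : Type*} [CommRing R] {S' : Subring R}
    (hSN : ∀ b : R, b ^ 2 ∈ S' → b ^ 3 ∈ S' → b ∈ S')
    {S T : Subring R} (hST : Relation.ReflTransGen RingElemSubintegral S T)
    (hS : S ≤ S') : T ≤ S' := by
  induction hST with
  | refl => exact hS
  | tail _ hstep ih =>
    obtain ⟨b, rfl, h2, h3⟩ := hstep
    refine Subring.closure_le.mpr ?_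
    rintro f (hf | rfl)
    · exact ih hf
    · exact hSN f (ih h2) (ih h3)

/-- The extension `𝔽_p[x^p] ⊆ 𝔽_p[x]` is weakly subintegral but not subintegral. -/
theorem stmt_7 (p : ℕ) [Fact p.Prime] :
    RingWeaklySubintegralExt
        (Subring.closure
          (Set.range (Polynomial.C : ZMod p →+* Polynomial (ZMod p)) ∪
            {(Polynomial.X : Polynomial (ZMod p)) ^ p})) ∧
      ¬ RingSubintegralExt
        (Subring.closure
          (Set.range (Polynomial.C : ZMod p →+* Polynomial (ZMod p)) ∪
            {(Polynomial.X : Polynomial (ZMod p)) ^ p})) := by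
  have hp : p.Prime := Fact.out
  set S : Subring (Polynomial (ZMod p)) :=
    Subring.closure
      (Set.range (Polynomial.C : ZMod p →+* Polynomial (ZMod p)) ∪
        {(Polynomial.X : Polynomial (ZMod p)) ^ p}) with hS
  constructor
  · -- weakly subintegral
    intro x
    refine ⟨Subring.closure ((S : Set (Polynomial (ZMod p))) ∪ {Polynomial.X}), ?_, ?_⟩
    · refine Relation.ReflTransGen.single (Or.inr ⟨Polynomial.X, p, hp, rfl, ?_, ?_⟩)
      · exact Subring.subset_closure (Or.inr rfl)
      · have : ((p : ℕ) : Polynomial (ZMod p)) = 0 := by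
          rw [← map_natCast (Polynomial.C : ZMod p →+* Polynomial (ZMod p)),
            ZMod.natCast_self, map_zero]
        rw [this, zero_mul]
        exact Subring.zero_mem _
    · -- every polynomial lies in closure (S ∪ {X})
      induction x using Polynomial.induction_on' with
      | add f g hf hg => exact Subring.add_mem _ hf hg
      | monomial n a =>
        rw [← Polynomial.C_mul_X_pow_eq_monomial]
        refine Subring.mul_mem _ ?_ (Subring.pow_mem _ ?_ n)
        · exact Subring.subset_closure
            (Or.inl (Subring.subset_closure (Or.inl ⟨a, rfl⟩)))
        · exact Subring.subset_closure (Or.inr rfl)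
  · -- not subintegral
    intro hsub
    obtain ⟨T, hchain, hXT⟩ := hsub Polynomial.X
    have hT : T ≤ derivZeroSubring (ZMod p) := by
      refine chain_le (fun b h2 h3 => derivZero_of_sq_cube h2 h3) hchain ?_
      rw [hS]
      refine Subring.closure_le.mpr ?_
      rintro f (⟨a, rfl⟩ | rfl)
      · exact Polynomial.derivative_C
      · show Polynomial.derivative _ = 0
        rw [Polynomial.derivative_X_pow]
        simp [ZMod.natCast_self]
    have := hT hXT
    rw [mem_derivZeroSubring, Polynomial.derivative_X] at this
    exact one_ne_zero this
end

section
/- Let A ⊆ B be an extension of commutative rings. There is an exact sequence of abelian groups 1 → U(A) → U(B) → 𝓘(A,B) → Pic(A) → Pic(B), where U denotes unit groups, 𝓘(A,B) is the group of invertible A-submodules of B, the map U(B) → 𝓘(A,B) sends b to Ab, 𝓘(A,B) → Pic(A) sends an invertible submodule to its class, and Pic(A) → Pic(B) is extension of scalars. -/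
open TensorProduct

section AuxGeneral
variable {R S : Type} [CommRing R] [CommRing S] [Algebra R S]


/-- An invertible submodule becomes free after base change: `S ⊗[R] I ≃ S`. -/
theorem baseChange_unit_equiv (I : (Submodule R S)ˣ) :
    Nonempty ((S ⊗[R] (I : Submodule R S)) ≃ₗ[S] S) := by
  set M : Submodule R S := (I : Submodule R S) with hM
  let f : S ⊗[R] M →ₗ[S] S :=
    TensorProduct.AlgebraTensorModule.lift (LinearMap.toSpanSingleton S (M →ₗ[R] S) M.subtype)
  have hf : ∀ (b : S) (m : M), f (b ⊗ₜ m) = b * (m : S) := fun b m => by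
    simp [f, smul_eq_mul]
  have h1 : (1 : S) ∈ M * ((I⁻¹ : (Submodule R S)ˣ) : Submodule R S) := by
    rw [hM, Units.mul_inv]
    exact Submodule.mem_one.mpr ⟨1, map_one _⟩
  have key : ∃ g : S →ₗ[S] S ⊗[R] M,
      f ∘ₗ g = (1 : S) • LinearMap.id ∧ g ∘ₗ f = (1 : S) • LinearMap.id := by
    refine Submodule.mul_induction_on h1 (fun i hi j hj => ?_) (fun x y hx hy => ?_)
    · refine ⟨LinearMap.toSpanSingleton S (S ⊗[R] M) (j ⊗ₜ ⟨i, hi⟩), ?_, ?_⟩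
      · apply LinearMap.ext; intro b
        simp only [LinearMap.comp_apply, LinearMap.toSpanSingleton_apply,
          LinearMap.smul_apply, LinearMap.id_apply, smul_eq_mul]
        rw [TensorProduct.smul_tmul', hf]
        simp only [smul_eq_mul]; ring
      · apply LinearMap.ext; intro x
        induction x using TensorProduct.induction_on with
        | zero => simp
        | tmul b m =>
          simp only [LinearMap.comp_apply, hf, LinearMap.toSpanSingleton_apply,
            LinearMap.smul_apply, LinearMap.id_apply]
          have hmj : (m : S) * j ∈ (1 : Submodule R S) := by
            rw [← Units.mul_inv I]
            exact Submodule.mul_mem_mul m.2 hj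
          have hij : i * j ∈ (1 : Submodule R S) := by
            rw [← Units.mul_inv I]
            exact Submodule.mul_mem_mul hi hj
          obtain ⟨a, ha⟩ := Submodule.mem_one.mp hmj
          obtain ⟨a', ha'⟩ := Submodule.mem_one.mp hij
          calc (b * (m : S)) • (j ⊗ₜ[R] (⟨i, hi⟩ : M))
              = (a • b) ⊗ₜ[R] (⟨i, hi⟩ : M) := by
                rw [TensorProduct.smul_tmul']; congr 1
                rw [smul_eq_mul, Algebra.smul_def, ha]; ring
            _ = b ⊗ₜ[R] (a • (⟨i, hi⟩ : M)) := TensorProduct.smul_tmul _ _ _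
            _ = b ⊗ₜ[R] (a' • m) := by
                congr 1; apply Subtype.ext
                simp only [SetLike.val_smul]
                rw [Algebra.smul_def, Algebra.smul_def, ha, ha']; ring
            _ = (a' • b) ⊗ₜ[R] m := (TensorProduct.smul_tmul _ _ _).symm
            _ = (i * j) • (b ⊗ₜ[R] m) := by
                rw [TensorProduct.smul_tmul']; congr 1
                rw [smul_eq_mul, Algebra.smul_def, ha']; try ring
        | add x y hx hy =>
          simp only [LinearMap.comp_apply, map_add, LinearMap.smul_apply,
            LinearMap.id_apply] at hx hy ⊢
          rw [hx, hy]
    · obtain ⟨g1, hg1, hg1'⟩ := hx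
      obtain ⟨g2, hg2, hg2'⟩ := hy
      refine ⟨g1 + g2, ?_, ?_⟩
      · rw [LinearMap.comp_add, hg1, hg2, ← add_smul]
      · rw [LinearMap.add_comp, hg1', hg2', ← add_smul]
  obtain ⟨g, hfg, hgf⟩ := key
  rw [one_smul] at hfg hgf
  exact ⟨LinearEquiv.ofLinear f g hfg hgf⟩



/-- Part 2. -/
theorem span_unit_eq_one_iff (hinj : Function.Injective (algebraMap R S)) (u : Sˣ) :
    Submodule.span R {(u : S)} = (1 : Submodule R S) ↔
      ∃ a : Rˣ, algebraMap R S (a : R) = (u : S) := by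
  constructor
  · intro h
    have hu : (u : S) ∈ (1 : Submodule R S) := by
      rw [← h]; exact Submodule.mem_span_singleton_self _
    obtain ⟨y, hy⟩ := Submodule.mem_one.mp hu
    have h1 : (1 : S) ∈ Submodule.span R {(u : S)} := by
      rw [h]; exact Submodule.mem_one.mpr ⟨1, map_one _⟩
    obtain ⟨c, hc⟩ := Submodule.mem_span_singleton.mp h1
    have hyc : y * c = 1 := by
      apply hinj
      rw [map_mul, map_one, hy]
      rw [Algebra.smul_def] at hc
      rw [mul_comm]; exact hc
    exact ⟨⟨y, c, hyc, by rw [mul_comm]; exact hyc⟩, hy⟩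
  · rintro ⟨a, ha⟩
    apply le_antisymm
    · rw [Submodule.span_le, Set.singleton_subset_iff]
      exact Submodule.mem_one.mpr ⟨a, ha⟩
    · rw [Submodule.one_le]
      apply Submodule.mem_span_singleton.mpr
      refine ⟨((a⁻¹ : Rˣ) : R), ?_⟩
      rw [Algebra.smul_def, ← ha, ← map_mul]
      simp

/-- Part 3. -/
theorem unit_principal_iff (hinj : Function.Injective (algebraMap R S)) (I : (Submodule R S)ˣ) :
    (∃ u : Sˣ, (I : Submodule R S) = Submodule.span R {(u : S)}) ↔
      Nonempty ((I : Submodule R S) ≃ₗ[R] R) := by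
  constructor
  · rintro ⟨u, hu⟩
    have hinj2 : Function.Injective (LinearMap.toSpanSingleton R S (u : S)) := by
      intro a b hab
      simp only [LinearMap.toSpanSingleton_apply, Algebra.smul_def] at hab
      exact hinj ((Units.mul_left_inj u).mp hab)
    have e0 := LinearEquiv.ofInjective _ hinj2
    have heq : (I : Submodule R S) = LinearMap.range (LinearMap.toSpanSingleton R S (u : S)) := by
      rw [hu, LinearMap.span_singleton_eq_range]
    exact ⟨(LinearEquiv.ofEq _ _ heq).trans e0.symm⟩
  · rintro ⟨e0⟩
    set x : S := ((e0.symm 1 : (I : Submodule R S)) : S) with hx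
    have hxI : x ∈ (I : Submodule R S) := (e0.symm 1).2
    have hspan : (I : Submodule R S) = Submodule.span R {x} := by
      apply le_antisymm
      · intro y hy
        apply Submodule.mem_span_singleton.mpr
        refine ⟨e0 ⟨y, hy⟩, ?_⟩
        have : (⟨y, hy⟩ : (I : Submodule R S)) = (e0 ⟨y, hy⟩) • e0.symm 1 := by
          rw [← map_smul, smul_eq_mul, mul_one, e0.symm_apply_apply]
        calc (e0 ⟨y, hy⟩) • x = ((e0 ⟨y, hy⟩) • e0.symm 1 : (I : Submodule R S)) := rfl
          _ = y := by rw [← this]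
      · rw [Submodule.span_le, Set.singleton_subset_iff]; exact hxI
    -- x is a unit
    have h1 : (1 : S) ∈ (I : Submodule R S) * ((I⁻¹ : (Submodule R S)ˣ) : Submodule R S) := by
      rw [Units.mul_inv]; exact Submodule.mem_one.mpr ⟨1, map_one _⟩
    have hex : ∃ t : S, x * t = 1 := by
      have := Submodule.mul_induction_on h1 (C := fun b => ∃ t : S, x * t = b)
        (fun i hi j hj => ?_) (fun y z hy hz => ?_)
      · exact this
      · rw [hspan] at hi
        obtain ⟨a, ha⟩ := Submodule.mem_span_singleton.mp hi
        refine ⟨algebraMap R S a * j, ?_⟩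
        rw [← ha, Algebra.smul_def]; ring
      · obtain ⟨t1, ht1⟩ := hy
        obtain ⟨t2, ht2⟩ := hz
        exact ⟨t1 + t2, by rw [mul_add, ht1, ht2]⟩
    obtain ⟨t, ht⟩ := hex
    exact ⟨⟨x, t, ht, by rw [mul_comm]; exact ht⟩, hspan⟩

variable {P Q : Type} [AddCommGroup P] [Module R P] [AddCommGroup Q] [Module R Q]


/-- If `P` is invertible, the canonical map `P → S ⊗[R] P` is injective. -/
theorem one_tmul_inj (hinj : Function.Injective (algebraMap R S))
    (eQ : P ⊗[R] Q ≃ₗ[R] R) :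
    Function.Injective (fun p : P => ((1 : S) ⊗ₜ[R] p : S ⊗[R] P)) := by
  have hker : ∀ p : P, (1 : S) ⊗ₜ[R] p = (0 : S ⊗[R] P) → p = 0 := by
    intro p hp
    have step1 : ∀ q : Q, p ⊗ₜ[R] q = (0 : P ⊗[R] Q) := by
      intro q
      have h2 : (1 : S) ⊗ₜ[R] (p ⊗ₜ[R] q) = (0 : S ⊗[R] (P ⊗[R] Q)) := by
        have := congrArg (LinearMap.lTensor S ((TensorProduct.mk R P Q).flip q)) hp
        simpa using this
      have h3 : (1 : S) ⊗ₜ[R] (eQ (p ⊗ₜ[R] q)) = (0 : S ⊗[R] R) := by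
        have := congrArg (LinearMap.lTensor S (eQ : P ⊗[R] Q →ₗ[R] R)) h2
        simpa using this
      have h4 : algebraMap R S (eQ (p ⊗ₜ[R] q)) = 0 := by
        have := congrArg (TensorProduct.AlgebraTensorModule.rid R S S) h3
        rw [TensorProduct.AlgebraTensorModule.rid_tmul, map_zero] at this
        rw [Algebra.algebraMap_eq_smul_one]
        exact this
      have h5 : eQ (p ⊗ₜ[R] q) = 0 := by
        apply hinj; rw [h4, map_zero]
      have := congrArg eQ.symm h5
      rw [eQ.symm_apply_apply, map_zero] at this
      exact this
    have step2 : ∀ t : Q ⊗[R] P, p ⊗ₜ[R] t = (0 : P ⊗[R] (Q ⊗[R] P)) := by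
      intro t
      induction t using TensorProduct.induction_on with
      | zero => rw [TensorProduct.tmul_zero]
      | tmul q p' =>
        have h : p ⊗ₜ[R] (q ⊗ₜ[R] p') =
            (TensorProduct.assoc R P Q P) ((p ⊗ₜ[R] q) ⊗ₜ[R] p') := rfl
        rw [h, step1 q, TensorProduct.zero_tmul, map_zero]
      | add x y hx hy => rw [TensorProduct.tmul_add, hx, hy, add_zero]
    let e3 : Q ⊗[R] P ≃ₗ[R] R := (TensorProduct.comm R Q P).trans eQ
    let U : P ≃ₗ[R] P ⊗[R] (Q ⊗[R] P) :=
      (TensorProduct.rid R P).symm.trans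
        (TensorProduct.congr (LinearEquiv.refl R P) e3.symm)
    have hU : U p = p ⊗ₜ[R] (e3.symm 1) := by
      simp [U, TensorProduct.rid_symm_apply]
    apply U.injective
    rw [hU, step2, map_zero]
  intro a b hab
  have : (1 : S) ⊗ₜ[R] (a - b) = (0 : S ⊗[R] P) := by
    rw [TensorProduct.tmul_sub, sub_eq_zero]
    exact hab
  have := hker _ this
  exact sub_eq_zero.mp this


theorem exists_unit_of_baseChange (hinj : Function.Injective (algebraMap R S))
    (one_tmul_inj : Function.Injective (fun p : P => ((1 : S) ⊗ₜ[R] p : S ⊗[R] P)))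
    (eQ : P ⊗[R] Q ≃ₗ[R] R) (e : S ⊗[R] P ≃ₗ[S] S) :
    ∃ I : (Submodule R S)ˣ, Nonempty (P ≃ₗ[R] (I : Submodule R S)) := by
  classical
  -- the iso `S ⊗ Q ≃ S`
  let e' : S ⊗[R] Q ≃ₗ[S] S :=
    (TensorProduct.AlgebraTensorModule.congr e.symm (LinearEquiv.refl R Q)).trans
      ((TensorProduct.AlgebraTensorModule.assoc R R S S P Q).trans
        ((TensorProduct.AlgebraTensorModule.congr (LinearEquiv.refl S S) eQ).trans
          (TensorProduct.AlgebraTensorModule.rid R S S)))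
  -- two isos `S ⊗ (P ⊗ Q) ≃ S`
  let F : S ⊗[R] (P ⊗[R] Q) ≃ₗ[S] S :=
    (TensorProduct.AlgebraTensorModule.congr (LinearEquiv.refl S S) eQ).trans
      (TensorProduct.AlgebraTensorModule.rid R S S)
  let E : S ⊗[R] (P ⊗[R] Q) ≃ₗ[S] S :=
    (TensorProduct.AlgebraTensorModule.assoc R R S S P Q).symm.trans
      ((TensorProduct.AlgebraTensorModule.congr e (LinearEquiv.refl R Q)).trans e')
  set u : S := E (F.symm 1) with hu
  set v : S := F (E.symm 1) with hv
  have hg : ∀ y : S, E (F.symm y) = y * u := by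
    intro y
    have : (F.symm y) = y • (F.symm 1) := by
      rw [← map_smul, smul_eq_mul, mul_one]
    rw [this, map_smul, smul_eq_mul, hu]
  have hvu : v * u = 1 := by
    have := hg v
    rw [hv, F.symm_apply_apply] at this
    rw [← this, E.apply_symm_apply]
  -- value of E and F on pure tensors
  have hE : ∀ (p : P) (q : Q),
      E ((1 : S) ⊗ₜ[R] (p ⊗ₜ[R] q)) = e ((1 : S) ⊗ₜ[R] p) * e' ((1 : S) ⊗ₜ[R] q) := by
    intro p q
    have h1 : (TensorProduct.AlgebraTensorModule.assoc R R S S P Q).symm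
        ((1 : S) ⊗ₜ[R] (p ⊗ₜ[R] q)) = ((1 : S) ⊗ₜ[R] p) ⊗ₜ[R] q := by
      apply (TensorProduct.AlgebraTensorModule.assoc R R S S P Q).injective
      rw [LinearEquiv.apply_symm_apply, TensorProduct.AlgebraTensorModule.assoc_tmul]
    show e' ((TensorProduct.AlgebraTensorModule.congr e (LinearEquiv.refl R Q))
        ((TensorProduct.AlgebraTensorModule.assoc R R S S P Q).symm
          ((1 : S) ⊗ₜ[R] (p ⊗ₜ[R] q)))) = _
    rw [h1, TensorProduct.AlgebraTensorModule.congr_tmul]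
    have h2 : (e ((1:S) ⊗ₜ[R] p)) ⊗ₜ[R] ((LinearEquiv.refl R Q) q)
        = (e ((1:S) ⊗ₜ[R] p)) • ((1 : S) ⊗ₜ[R] q) := by
      rw [TensorProduct.smul_tmul', smul_eq_mul, mul_one, LinearEquiv.refl_apply]
    rw [h2, map_smul, smul_eq_mul]
  have hF : ∀ (p : P) (q : Q),
      F ((1 : S) ⊗ₜ[R] (p ⊗ₜ[R] q)) = algebraMap R S (eQ (p ⊗ₜ[R] q)) := by
    intro p q
    show (TensorProduct.AlgebraTensorModule.rid R S S)
      ((TensorProduct.AlgebraTensorModule.congr (LinearEquiv.refl S S) eQ)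
        ((1 : S) ⊗ₜ[R] (p ⊗ₜ[R] q))) = _
    rw [TensorProduct.AlgebraTensorModule.congr_tmul,
      TensorProduct.AlgebraTensorModule.rid_tmul, LinearEquiv.refl_apply,
      Algebra.algebraMap_eq_smul_one]
  -- the two maps into S
  let φ : P →ₗ[R] S := (e.toLinearMap.restrictScalars R) ∘ₗ ((TensorProduct.mk R S P) 1)
  let ψ : Q →ₗ[R] S := v • ((e'.toLinearMap.restrictScalars R) ∘ₗ ((TensorProduct.mk R S Q) 1))
  have hφ : ∀ p : P, φ p = e ((1 : S) ⊗ₜ[R] p) := fun p => rfl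
  have hψ : ∀ q : Q, ψ q = v * e' ((1 : S) ⊗ₜ[R] q) := fun q => rfl
  have hPi : ∀ (p : P) (q : Q), φ p * ψ q = algebraMap R S (eQ (p ⊗ₜ[R] q)) := by
    intro p q
    have hEF : E ((1 : S) ⊗ₜ[R] (p ⊗ₜ[R] q)) = F ((1 : S) ⊗ₜ[R] (p ⊗ₜ[R] q)) * u := by
      rw [← hg, F.symm_apply_apply]
    rw [hE, hF] at hEF
    rw [hφ, hψ]
    calc e ((1:S) ⊗ₜ[R] p) * (v * e' ((1:S) ⊗ₜ[R] q))
        = v * (e ((1:S) ⊗ₜ[R] p) * e' ((1:S) ⊗ₜ[R] q)) := by ring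
      _ = v * (algebraMap R S (eQ (p ⊗ₜ[R] q)) * u) := by rw [hEF]
      _ = (v * u) * algebraMap R S (eQ (p ⊗ₜ[R] q)) := by ring
      _ = algebraMap R S (eQ (p ⊗ₜ[R] q)) := by rw [hvu, one_mul]
  -- the submodules
  set I : Submodule R S := LinearMap.range φ with hI
  set J : Submodule R S := LinearMap.range ψ with hJ
  have hIJ : I * J = 1 := by
    apply le_antisymm
    · rw [Submodule.mul_le]
      intro m hm n hn
      obtain ⟨p, rfl⟩ := hm
      obtain ⟨q, rfl⟩ := hn
      rw [hPi]
      exact Submodule.mem_one.mpr ⟨_, rfl⟩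
    · rw [Submodule.one_le]
      have hall : ∀ x : P ⊗[R] Q, algebraMap R S (eQ x) ∈ I * J := by
        intro x
        induction x using TensorProduct.induction_on with
        | zero => rw [map_zero, map_zero]; exact Submodule.zero_mem _
        | tmul p q =>
          rw [← hPi]
          exact Submodule.mul_mem_mul (LinearMap.mem_range_self φ p)
            (LinearMap.mem_range_self ψ q)
        | add x y hx hy => rw [map_add, map_add]; exact Submodule.add_mem _ hx hy
      have := hall (eQ.symm 1)
      rwa [eQ.apply_symm_apply, map_one] at this
  have hJI : J * I = 1 := by rw [mul_comm]; exact hIJ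
  have hφinj : Function.Injective φ := by
    intro a b hab
    apply one_tmul_inj
    apply e.injective
    rw [← hφ, ← hφ, hab]
  exact ⟨⟨I, J, hIJ, hJI⟩, ⟨LinearEquiv.ofInjective φ hφinj⟩⟩

end AuxGeneral

/-- A module `P` over `A` is invertible if `P ⊗ Q ≅ A` for some `A`-module `Q`. -/
def IsInvertibleModule (A : Type*) [CommRing A] (P : Type*) [AddCommGroup P]
    [Module A P] : Prop :=
  ∃ (Q : Type) (_ : AddCommGroup Q) (_ : Module A Q),
    Nonempty ((P ⊗[A] Q) ≃ₗ[A] A)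

/-- For an extension `A ⊆ B` of commutative rings there is an exact sequence
`1 → U(A) → U(B) → 𝓘(A,B) → Pic(A) → Pic(B)`, where `𝓘(A,B) = (Submodule A B)ˣ` is the
group of invertible `A`-submodules of `B`.  Exactness is expressed pointwise:
(1) `U(A) → U(B)` is injective;
(2) a unit `b ∈ U(B)` spans the trivial submodule `A` iff it comes from `U(A)`;
(3) an invertible `A`-submodule is principal (spanned by a unit of `B`) iff its class in
`Pic(A)` is trivial, i.e. it is free of rank one;
(4) an invertible `A`-module `P` becomes trivial in `Pic(B)` (i.e. `B ⊗[A] P ≅ B`) iff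
its class lies in the image of `𝓘(A,B) → Pic(A)`, i.e. `P` is isomorphic to an
invertible `A`-submodule of `B`. -/
theorem stmt_9 {B : Type} [CommRing B] (A : Subring B) :
    (∀ a₁ a₂ : Aˣ, ((a₁ : A) : B) = ((a₂ : A) : B) → a₁ = a₂) ∧
    (∀ u : Bˣ,
      Submodule.span A {(u : B)} = (1 : Submodule A B) ↔
        ∃ a : Aˣ, ((a : A) : B) = (u : B)) ∧
    (∀ I : (Submodule A B)ˣ,
      (∃ u : Bˣ, (I : Submodule A B) = Submodule.span A {(u : B)}) ↔
        Nonempty ((I : Submodule A B) ≃ₗ[A] A)) ∧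
    (∀ (P : Type) (_ : AddCommGroup P) (_ : Module A P), IsInvertibleModule A P →
      (Nonempty ((B ⊗[A] P) ≃ₗ[B] B) ↔
        ∃ I : (Submodule A B)ˣ, Nonempty (P ≃ₗ[A] (I : Submodule A B)))) := by
  constructor
  · -- (1) injectivity of U(A) → U(B)
    intro a₁ a₂ h
    exact Units.ext (Subtype.ext h)
  refine ⟨?_, ?_, ?_⟩
  · -- (2)
    intro u
    exact span_unit_eq_one_iff (R := A) (S := B) Subtype.val_injective u
  · -- (3)
    intro I
    exact unit_principal_iff (R := A) (S := B) Subtype.val_injective I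
  · -- (4)
    intro P instP instMP hP
    letI := instP; letI := instMP
    obtain ⟨Q, hQ1, hQ2, hne⟩ := hP
    letI := hQ1; letI := hQ2
    obtain ⟨eQ⟩ := hne
    constructor
    · rintro ⟨e⟩
      exact exists_unit_of_baseChange Subtype.val_injective
        (one_tmul_inj (R := A) (S := B) Subtype.val_injective eQ) eQ e
    · rintro ⟨I, ⟨h⟩⟩
      obtain ⟨E1⟩ := baseChange_unit_equiv (R := A) (S := B) I
      exact ⟨(TensorProduct.AlgebraTensorModule.congr (LinearEquiv.refl B B) h).trans E1⟩
end

section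
/- Let A ⊆ B be a ring extension and b ∈ B with b², b³ ∈ A. Then the A-submodules J = A·b² + A·(1−b) and J' = A·b² + A·(1+b) of B satisfy J·J' = A, so J is an invertible A-submodule of B. -/
/-- Let `A ⊆ B` be an extension of commutative rings and `b ∈ B` with `b², b³ ∈ A`.
Then the `A`-submodules `J = A·b² + A·(1−b)` and `J' = A·b² + A·(1+b)` of `B`
satisfy `J·J' = A`, so `J` is an invertible `A`-submodule of `B`. -/
theorem stmt_10 {B : Type*} [CommRing B] (A : Subring B) (b : B)
    (hb2 : b ^ 2 ∈ A) (hb3 : b ^ 3 ∈ A) :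
    (Submodule.span A {b ^ 2, 1 - b} : Submodule A B) * Submodule.span A {b ^ 2, 1 + b} = 1 ∧
      IsUnit (Submodule.span A {b ^ 2, 1 - b} : Submodule A B) := by
  have hmain :
      (Submodule.span A {b ^ 2, 1 - b} : Submodule A B) * Submodule.span A {b ^ 2, 1 + b} = 1 := by
    apply le_antisymm
    · rw [Submodule.span_mul_span, Submodule.span_le]
      rintro x ⟨y, hy, z, hz, rfl⟩
      have key : ∀ w : B, w ∈ A → w ∈ (1 : Submodule A B) := by
        intro w hw
        rw [Submodule.mem_one]
        exact ⟨⟨w, hw⟩, rfl⟩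
      rcases hy with rfl | rfl <;> rcases hz with rfl | rfl
      · exact key _ (mul_mem hb2 hb2)
      · show b ^ 2 * (1 + b) ∈ (1 : Submodule A B)
        have h : b ^ 2 * (1 + b) = b ^ 2 + b ^ 3 := by ring
        rw [h]; exact key _ (add_mem hb2 hb3)
      · show (1 - b) * b ^ 2 ∈ (1 : Submodule A B)
        have h : (1 - b) * b ^ 2 = b ^ 2 - b ^ 3 := by ring
        rw [h]; exact key _ (sub_mem hb2 hb3)
      · show (1 - b) * (1 + b) ∈ (1 : Submodule A B)
        have h : (1 - b) * (1 + b) = 1 - b ^ 2 := by ring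
        rw [h]; exact key _ (sub_mem (one_mem A) hb2)
    · rw [Submodule.one_le]
      have h1 : b ^ 2 * b ^ 2 ∈
          (Submodule.span A {b ^ 2, 1 - b} : Submodule A B) * Submodule.span A {b ^ 2, 1 + b} :=
        Submodule.mul_mem_mul (Submodule.subset_span (by simp))
          (Submodule.subset_span (by simp))
      have h2 : (1 - b) * (1 + b) ∈
          (Submodule.span A {b ^ 2, 1 - b} : Submodule A B) * Submodule.span A {b ^ 2, 1 + b} :=
        Submodule.mul_mem_mul (Submodule.subset_span (by simp))
          (Submodule.subset_span (by simp))
      have h3 := Submodule.smul_mem _ (⟨1 + b ^ 2, add_mem (one_mem A) hb2⟩ : A) h2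
      have h4 := Submodule.smul_mem _ ((1 : A)) h1
      have := Submodule.add_mem _ h3 h4
      convert this using 1
      show (1 : B) = (1 + b ^ 2) * ((1 - b) * (1 + b)) + 1 * (b ^ 2 * b ^ 2)
      ring
  exact ⟨hmain, IsUnit.of_mul_eq_one _ hmain⟩
end

section
/- Let A ⊆ B be a ring extension that is subintegrally closed (i.e., b ∈ B with b², b³ ∈ A implies b ∈ A), and suppose g ∈ B with g², g³ ∈ A. Then the A-submodules J = A·g² + A·(1+g+g²) and J' = A·g² + A·(1−g+g²) of B satisfy J·J' = A. -/
/-- If `A ⊆ B` is subintegrally closed and `g ∈ B` with `g², g³ ∈ A`, then the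
`A`-submodules `J = A·g² + A·(1+g+g²)` and `J' = A·g² + A·(1−g+g²)` of `B`
satisfy `J·J' = A`. -/
theorem stmt_11 {B : Type*} [CommRing B] (A : Subring B)
    (hA : ∀ b : B, b ^ 2 ∈ A → b ^ 3 ∈ A → b ∈ A)
    (g : B) (hg2 : g ^ 2 ∈ A) (hg3 : g ^ 3 ∈ A) :
    (Submodule.span A {g ^ 2, 1 + g + g ^ 2} : Submodule A B) *
      Submodule.span A {g ^ 2, 1 - g + g ^ 2} = 1 := by
  have memA : ∀ x : B, x ∈ A → x ∈ (1 : Submodule A B) := fun x hx =>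
    Submodule.mem_one.mpr ⟨⟨x, hx⟩, rfl⟩
  have hg4 : g ^ 4 ∈ A := by
    have := A.mul_mem hg2 hg2
    have e : g ^ 2 * g ^ 2 = g ^ 4 := by ring
    rwa [e] at this
  apply le_antisymm
  · rw [Submodule.span_mul_span, Submodule.span_le]
    rintro x hx
    rw [Set.mem_mul] at hx
    obtain ⟨a, ha, b, hb, rfl⟩ := hx
    apply memA
    rcases ha with ha | ha <;> rcases hb with hb | hb <;> subst ha <;> subst hb
    · have e : g ^ 2 * g ^ 2 = g ^ 4 := by ring
      rw [e]; exact hg4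
    · have e : g ^ 2 * (1 - g + g ^ 2) = g ^ 2 - g ^ 3 + g ^ 4 := by ring
      rw [e]; exact A.add_mem (A.sub_mem hg2 hg3) hg4
    · have e : (1 + g + g ^ 2) * g ^ 2 = g ^ 2 + g ^ 3 + g ^ 4 := by ring
      rw [e]; exact A.add_mem (A.add_mem hg2 hg3) hg4
    · have e : (1 + g + g ^ 2) * (1 - g + g ^ 2) = 1 + g ^ 2 + g ^ 4 := by ring
      rw [e]; exact A.add_mem (A.add_mem A.one_mem hg2) hg4
  · rw [Submodule.one_le]
    set P := (Submodule.span A {g ^ 2, 1 + g + g ^ 2} : Submodule A B) *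
      Submodule.span A {g ^ 2, 1 - g + g ^ 2} with hP
    have p1 : g ^ 2 * g ^ 2 ∈ P :=
      Submodule.mul_mem_mul (Submodule.subset_span (by simp)) (Submodule.subset_span (by simp))
    have p2 : (1 + g + g ^ 2) * (1 - g + g ^ 2) ∈ P :=
      Submodule.mul_mem_mul (Submodule.subset_span (by simp)) (Submodule.subset_span (by simp))
    have p3 : (1 : B) + g ^ 2 ∈ P := by
      have h := P.sub_mem p2 p1
      have e : (1 + g + g ^ 2) * (1 - g + g ^ 2) - g ^ 2 * g ^ 2 = 1 + g ^ 2 := by ring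
      rwa [e] at h
    have hsub : (1 : B) - g ^ 2 ∈ A := A.sub_mem A.one_mem hg2
    have h := P.add_mem (P.smul_mem ⟨_, hsub⟩ p3) p1
    have e : (⟨_, hsub⟩ : A) • ((1 : B) + g ^ 2) + g ^ 2 * g ^ 2 = 1 := by
      show ((1 : B) - g ^ 2) * (1 + g ^ 2) + g ^ 2 * g ^ 2 = 1
      ring
    rwa [e] at h
end

section
/- Let A ⊆ B be an extension of commutative rings with A subintegrally closed in B. Then A/Nil(A) is subintegrally closed in B/Nil(B). -/
/-- If `A` is subintegrally closed in `B`, then `A/Nil(A)` (identified with the image of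
`A` in `B/Nil(B)`) is subintegrally closed in `B/Nil(B)`. -/
theorem stmt_13 {B : Type*} [CommRing B] (A : Subring B)
    (hA : ∀ b : B, b ^ 2 ∈ A → b ^ 3 ∈ A → b ∈ A) :
    ∀ y : B ⧸ nilradical B,
      y ^ 2 ∈ A.map (Ideal.Quotient.mk (nilradical B)) →
      y ^ 3 ∈ A.map (Ideal.Quotient.mk (nilradical B)) →
      y ∈ A.map (Ideal.Quotient.mk (nilradical B)) := by
  -- First: every nilpotent element of `B` lies in `A`.
  have hnil : ∀ n : ℕ, ∀ u : B, u ^ n = 0 → u ∈ A := by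
    intro n
    induction n using Nat.strong_induction_on with
    | _ n ih =>
      intro u hu
      match n, hu with
      | 0, hu =>
        simp only [pow_zero] at hu
        have : u = 0 := by
          calc u = u * 1 := (mul_one u).symm
            _ = u * 0 := by rw [hu]
            _ = 0 := mul_zero u
        rw [this]; exact A.zero_mem
      | 1, hu => simp only [pow_one] at hu; rw [hu]; exact A.zero_mem
      | (n+2), hu =>
        apply hA
        · apply ih (n + 1) (by omega)
          rw [← pow_mul]
          have : u ^ (2 * (n + 1)) = u ^ (n + 2) * u ^ n := by ring
          rw [this, hu, zero_mul]
        · apply ih (n + 1) (by omega)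
          rw [← pow_mul]
          have : u ^ (3 * (n + 1)) = u ^ (n + 2) * u ^ (2 * n + 1) := by ring
          rw [this, hu, zero_mul]
  have hnil' : ∀ u : B, u ∈ nilradical B → u ∈ A := by
    intro u hu
    obtain ⟨n, hn⟩ := hu
    exact hnil n u hn
  intro y h2 h3
  obtain ⟨b, rfl⟩ := Ideal.Quotient.mk_surjective y
  obtain ⟨a2, ha2, ha2'⟩ := h2
  obtain ⟨a3, ha3, ha3'⟩ := h3
  have e2 : b ^ 2 - a2 ∈ nilradical B := by
    rw [← Ideal.Quotient.eq_zero_iff_mem, map_sub, map_pow, ha2', ← map_pow, sub_self]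
  have e3 : b ^ 3 - a3 ∈ nilradical B := by
    rw [← Ideal.Quotient.eq_zero_iff_mem, map_sub, map_pow, ha3', ← map_pow, sub_self]
  have hb : b ∈ A := by
    apply hA
    · have := A.add_mem (hnil' _ e2) ha2
      simpa using this
    · have := A.add_mem (hnil' _ e3) ha3
      simpa using this
  exact ⟨b, hb, rfl⟩
end

section
/- Let A be a commutative ring, M a monoid, and 𝔭 a prime ideal of M. Then the quotient A[M]/𝔭A[M] of the monoid algebra by the ideal generated by 𝔭 is isomorphic as an A-algebra to the monoid algebra A[M \ 𝔭]. -/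
/-- For a commutative ring `A`, a commutative monoid `M` and a prime monoid ideal
`𝔭 ⊆ M`, the quotient `A[M]/𝔭A[M]` is isomorphic as an `A`-algebra to `A[M \ 𝔭]`. -/
theorem stmt_18 {A : Type*} [CommRing A] {M : Type*} [CommMonoid M]
    (𝔭 : Set M)
    (hIdeal : ∀ x ∈ 𝔭, ∀ m : M, x * m ∈ 𝔭)
    (hProper : 𝔭 ≠ Set.univ)
    (hPrime : ∀ x y : M, x * y ∈ 𝔭 → x ∈ 𝔭 ∨ y ∈ 𝔭)
    (Mp : Submonoid M) (hMp : (Mp : Set M) = 𝔭ᶜ) :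
    Nonempty
      ((MonoidAlgebra A M ⧸ Ideal.span ((MonoidAlgebra.of A M) '' 𝔭)) ≃ₐ[A]
        MonoidAlgebra A Mp) := by
  classical
  have hmem : ∀ m : M, m ∈ Mp ↔ m ∉ 𝔭 := by
    intro m
    rw [← SetLike.mem_coe, hMp]; rfl
  have h1 : (1 : M) ∈ Mp := by
    rw [hmem]
    intro h1
    apply hProper
    ext m
    simpa using hIdeal 1 h1 m
  -- the monoid hom M → A[Mp]
  set f : M →* MonoidAlgebra A Mp :=
    { toFun := fun m => if h : m ∈ Mp then MonoidAlgebra.of A Mp ⟨m, h⟩ else 0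
      map_one' := by
        simp only [dif_pos h1]
        exact map_one (MonoidAlgebra.of A Mp)
      map_mul' := by
        intro x y
        by_cases hx : x ∈ Mp
        · by_cases hy : y ∈ Mp
          · simp only [dif_pos hx, dif_pos hy, dif_pos (mul_mem hx hy)]
            rw [← map_mul]; rfl
          · have hy𝔭 : y ∈ 𝔭 := by
              by_contra h; exact hy ((hmem y).mpr h)
            have hxy : x * y ∉ Mp := fun h =>
              (hmem _).mp h (mul_comm x y ▸ hIdeal y hy𝔭 x)
            simp only [dif_neg hxy, dif_neg hy, mul_zero]
        · have hx𝔭 : x ∈ 𝔭 := by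
            by_contra h; exact hx ((hmem x).mpr h)
          have hxy : x * y ∉ Mp := fun h =>
            (hmem _).mp h (hIdeal x hx𝔭 y)
          simp only [dif_neg hxy, dif_neg hx, zero_mul] } with hf
  set φ : MonoidAlgebra A M →ₐ[A] MonoidAlgebra A Mp := MonoidAlgebra.lift A _ M f with hφ
  set I : Ideal (MonoidAlgebra A M) := Ideal.span ((MonoidAlgebra.of A M) '' 𝔭) with hI
  have hfspec : ∀ m : M, f m = if h : m ∈ Mp then MonoidAlgebra.of A Mp ⟨m, h⟩ else 0 := by
    intro m; rfl
  have hker : ∀ a ∈ I, φ a = 0 := by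
    intro a ha
    rw [hI] at ha
    refine Submodule.span_induction ?_ ?_ ?_ ?_ ha
    · rintro x ⟨m, hm, rfl⟩
      have hm' : m ∉ Mp := fun h => (hmem m).mp h hm
      rw [hφ, MonoidAlgebra.lift_of, hfspec, dif_neg hm']
    · simp
    · intro x y _ _ hx hy; simp [hx, hy]
    · intro r x _ hx; simp [smul_eq_mul, hx]
  set φ' : (MonoidAlgebra A M ⧸ I) →ₐ[A] MonoidAlgebra A Mp :=
    Ideal.Quotient.liftₐ I φ hker with hφ'
  set g : Mp →* (MonoidAlgebra A M ⧸ I) :=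
    ((Ideal.Quotient.mkₐ A I : MonoidAlgebra A M →ₐ[A] _) : MonoidAlgebra A M →* _).comp
      ((MonoidAlgebra.of A M).comp Mp.subtype) with hg
  set ψ : MonoidAlgebra A Mp →ₐ[A] (MonoidAlgebra A M ⧸ I) := MonoidAlgebra.lift A _ Mp g with hψ
  have hφof : ∀ m : M, φ (MonoidAlgebra.of A M m) =
      if h : m ∈ Mp then MonoidAlgebra.of A Mp ⟨m, h⟩ else 0 := by
    intro m; rw [hφ, MonoidAlgebra.lift_of, hfspec]
  have hψof : ∀ m : Mp, ψ (MonoidAlgebra.of A Mp m) =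
      Ideal.Quotient.mk I (MonoidAlgebra.of A M (m : M)) := by
    intro m; rw [hψ, MonoidAlgebra.lift_of]; rfl
  have h2 : φ'.comp ψ = AlgHom.id A _ := by
    apply MonoidAlgebra.algHom_ext
    intro m
    rw [← MonoidAlgebra.of_apply]
    simp only [AlgHom.coe_comp, Function.comp_apply, AlgHom.id_apply]
    rw [hψof, hφ']
    show φ (MonoidAlgebra.of A M (m : M)) = _
    rw [hφof, dif_pos m.2]
    exact Subsingleton.elim _ _
  have h3 : ψ.comp φ' = AlgHom.id A _ := by
    apply Ideal.Quotient.algHom_ext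
    apply MonoidAlgebra.algHom_ext
    intro m
    rw [← MonoidAlgebra.of_apply]
    simp only [AlgHom.coe_comp, Function.comp_apply, AlgHom.id_apply, Ideal.Quotient.mkₐ_eq_mk]
    rw [hφ']
    show ψ (φ (MonoidAlgebra.of A M m)) = _
    rw [hφof]
    by_cases hm : m ∈ Mp
    · rw [dif_pos hm, hψof]
    · rw [dif_neg hm, map_zero]
      have hm𝔭 : m ∈ 𝔭 := by
        by_contra h; exact hm ((hmem m).mpr h)
      symm
      rw [Ideal.Quotient.eq_zero_iff_mem, hI]
      exact Ideal.subset_span ⟨m, hm𝔭, rfl⟩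
    exact Subsingleton.elim _ _
  exact ⟨AlgEquiv.ofAlgHom φ' ψ h2 h3⟩
end
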